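/- Let A, B be unital superalgebras, P an A–B-superbimodule and Q a B–A-superbimodule. Define C_{m,n} = P⊗B^{⊗n}⊗Q⊗A^{⊗m}, let d'_{m,n}: C_{m,n} → C_{m-1,n} be the graded Hochschild differential of A with coefficients in the A-bimodule P⊗B^{⊗n}⊗Q, and let d''_{m,n}: C_{m,n} → C_{m,n-1} be (-1)^m times the conjugate by the cyclic permutation ω of the graded Hochschild differential of B with coefficients in Q⊗A^{⊗m}⊗P. Then d'd'' + d''d' = 0, so (C_{m,n}, d', d'') is a double complex. -/

import Mathlib

open PiTensorProduct MulOpposite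
open scoped TensorProduct

/-- The Koszul sign `(-1)^{ij}` for `Z₂`-degrees `i, j`. -/
def ksign (i j : ZMod 2) : ℤ := (-1) ^ (i.val * j.val)

/-- The inner face map on indexed families: multiply the `i`-th and `(i+1)`-st entries. -/
def mulFace {A : Type} [Mul A] {n : ℕ} (i : ℕ) (a : Fin (n + 1) → A) : Fin n → A :=
  fun k =>
    if (k : ℕ) < i then a (Fin.castSucc k)
    else if (k : ℕ) = i then a (Fin.castSucc k) * a (Fin.succ k)
    else a (Fin.succ k)

/-!
On a homogeneous pure tensor both `d'` and `d''` are alternating sums of three kinds of faces.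
The faces of `d'` act on the `A`-factors, on `Q` from the right and on `P` from the left; those
of `d''` act on the `B`-factors, on `P` from the right and on `Q` from the left. As the two actions
on `P` (and on `Q`) commute, every face of one kind commutes with every face of the other. The
Koszul sign of a last face depends only on the degree of the factor it moves and on the total
degree of the remaining ones, which the faces of the other kind preserve. Hence `d' d''` and
`d'' d'` expand to the same double sum, up to the prefactors `(-1)^(m+1)` and `(-1)^m` of `d''`.
-/

def addFace {ι : Type*} [Add ι] {n : ℕ} (i : ℕ) (d : Fin (n + 1) → ι) : Fin n → ι :=
  fun k =>
    if (k : ℕ) < i then d (Fin.castSucc k)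
    else if (k : ℕ) = i then d (Fin.castSucc k) + d (Fin.succ k)
    else d (Fin.succ k)

theorem addFace_eq {ι : Type*} [AddMonoid ι] {n : ℕ} (j : Fin n) (d : Fin (n + 1) → ι)
    (k : Fin n) : addFace j d k = d (j.succ.succAbove k) + if k = j then d j.succ else 0 := by
  simp only [addFace, Fin.succAbove, Fin.lt_def, Fin.ext_iff, Fin.val_castSucc, Fin.val_succ]
  split_ifs <;> first | omega | simp_all [← Fin.ext_iff]

theorem sum_addFace {ι : Type*} [AddCommMonoid ι] {n : ℕ} (j : Fin n) (d : Fin (n + 1) → ι) :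
    ∑ k, addFace j d k = ∑ k, d k := by
  simp only [addFace_eq, Finset.sum_add_distrib, Finset.sum_ite_eq', Finset.mem_univ, if_true]
  rw [Fin.sum_univ_succAbove d j.succ, add_comm]

theorem mulFace_mem {ι R : Type*} {A : Type} [AddMonoid ι] [CommSemiring R] [Semiring A]
    [Algebra R A] (𝒜 : ι → Submodule R A) [SetLike.GradedMul 𝒜] {n : ℕ} (i : ℕ)
    {d : Fin (n + 1) → ι} {a : Fin (n + 1) → A} (ha : ∀ k, a k ∈ 𝒜 (d k)) (k : Fin n) :
    mulFace i a k ∈ 𝒜 (addFace i d k) := by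
  unfold mulFace addFace
  split_ifs
  · exact ha _
  · exact SetLike.mul_mem_graded (ha _) (ha _)
  · exact ha _

section HochschildSum

variable {V W : Type*} [AddCommGroup V] [AddCommGroup W]

-- `x₀`, `x i` and `xₗ` stand for the first, the `(i + 1)`-st and the last face of a pure tensor;
-- `c` is the sign of the last face, Koszul sign included.
def hochschildSum {m : ℕ} (x₀ : V) (x : Fin m → V) (c : ℤ) (xₗ : V) : V :=
  x₀ + ∑ i : Fin m, (-1 : ℤ) ^ ((i : ℕ) + 1) • x i + c • xₗ

theorem map_hochschildSum {F : Type*} [FunLike F V W] [AddMonoidHomClass F V W] (f : F) {m : ℕ}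
    (x₀ : V) (x : Fin m → V) (c : ℤ) (xₗ : V) :
    f (hochschildSum x₀ x c xₗ) = hochschildSum (f x₀) (fun i => f (x i)) c (f xₗ) := by
  simp only [hochschildSum, map_add, map_sum, map_zsmul]

theorem smul_hochschildSum (s : ℤ) {m : ℕ} (x₀ : V) (x : Fin m → V) (c : ℤ) (xₗ : V) :
    s • hochschildSum x₀ x c xₗ = hochschildSum (s • x₀) (fun i => s • x i) c (s • xₗ) :=
  map_hochschildSum (zsmulAddGroupHom s) x₀ x c xₗ

theorem hochschildSum_comm {m n : ℕ} (c c' : ℤ) (e₀₀ e₀ₗ eₗ₀ eₗₗ : V) (e₀ eₗ : Fin n → V)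
    (f₀ fₗ : Fin m → V) (g : Fin m → Fin n → V) :
    hochschildSum (hochschildSum e₀₀ e₀ c' e₀ₗ) (fun i => hochschildSum (f₀ i) (g i) c' (fₗ i)) c
        (hochschildSum eₗ₀ eₗ c' eₗₗ) =
      hochschildSum (hochschildSum e₀₀ f₀ c eₗ₀) (fun j => hochschildSum (e₀ j) (g · j) c (eₗ j))
        c' (hochschildSum e₀ₗ fₗ c eₗₗ) := by
  simp only [hochschildSum, smul_add, Finset.smul_sum, smul_smul, Finset.sum_add_distrib]
  rw [Finset.sum_comm]
  simp only [mul_comm]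
  abel

end HochschildSum

section Spanning

variable {ι R M N : Type*} [CommSemiring R] [AddCommMonoid M] [Module R M] [AddCommMonoid N]
  [Module R N]

theorem span_homogeneous_eq_top [DecidableEq ι] (𝒢 : ι → Submodule R M)
    [DirectSum.Decomposition 𝒢] :
    Submodule.span R {x | ∃ i, x ∈ 𝒢 i} = ⊤ :=
  eq_top_iff.2 fun x _ => DirectSum.Decomposition.inductionOn 𝒢 (Submodule.zero_mem _)
    (fun y => Submodule.subset_span ⟨_, y.2⟩) (fun _ _ => Submodule.add_mem _) x

theorem span_tprod_homogeneous_eq_top [DecidableEq ι] {κ : Type*} [Fintype κ]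
    (𝒢 : ι → Submodule R M) [DirectSum.Decomposition 𝒢] :
    Submodule.span R {x : ⨂[R] _ : κ, M |
      ∃ (d : κ → ι) (a : κ → M), (∀ k, a k ∈ 𝒢 (d k)) ∧ tprod R a = x} = ⊤ := by
  classical
  rw [eq_top_iff, ← span_tprod_eq_top, Submodule.span_le]
  rintro _ ⟨a, rfl⟩
  have ha : a = fun k => ∑ i ∈ (DirectSum.decompose 𝒢 (a k)).support,
      (DirectSum.decompose 𝒢 (a k) i : M) :=
    funext fun k => (DirectSum.sum_support_decompose 𝒢 (a k)).symm
  rw [ha, MultilinearMap.map_sum_finset]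
  exact Submodule.sum_mem _ fun d _ =>
    Submodule.subset_span ⟨d, _, fun k => (DirectSum.decompose 𝒢 (a k) (d k)).2, rfl⟩

theorem span_image2_tmul_eq_top {s : Set M} {t : Set N} (hs : Submodule.span R s = ⊤)
    (ht : Submodule.span R t = ⊤) :
    Submodule.span R (Set.image2 (· ⊗ₜ[R] ·) s t) = ⊤ := by
  rw [← TensorProduct.map₂_mk_top_top_eq_top, ← hs, ← ht, Submodule.map₂_span_span]
  rfl

end Spanning

section PureTensor

variable (R : Type*) {P B Q A : Type*} [CommSemiring R] [AddCommMonoid P] [Module R P]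
  [AddCommMonoid B] [Module R B] [AddCommMonoid Q] [Module R Q] [AddCommMonoid A] [Module R A]

def pureTensor {m n : ℕ} (p : P) (b : Fin n → B) (q : Q) (a : Fin m → A) :
    ((P ⊗[R] TensorPower R n B) ⊗[R] Q) ⊗[R] TensorPower R m A :=
  ((p ⊗ₜ[R] tprod R b) ⊗ₜ[R] q) ⊗ₜ[R] tprod R a

variable {R} in
theorem span_homogeneous_pureTensor_eq_top {ι : Type*} [DecidableEq ι]
    (𝒢P : ι → Submodule R P) [DirectSum.Decomposition 𝒢P]
    (ℬ : ι → Submodule R B) [DirectSum.Decomposition ℬ]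
    (𝒢Q : ι → Submodule R Q) [DirectSum.Decomposition 𝒢Q]
    (𝒜 : ι → Submodule R A) [DirectSum.Decomposition 𝒜] (m n : ℕ) :
    Submodule.span R {x | ∃ (dp dq : ι) (degb : Fin n → ι) (dega : Fin m → ι)
      (p : P) (q : Q) (b : Fin n → B) (a : Fin m → A),
      p ∈ 𝒢P dp ∧ q ∈ 𝒢Q dq ∧ (∀ k, b k ∈ ℬ (degb k)) ∧ (∀ k, a k ∈ 𝒜 (dega k)) ∧
        pureTensor R p b q a = x} = ⊤ := by
  have h := span_image2_tmul_eq_top (span_image2_tmul_eq_top (span_image2_tmul_eq_top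
    (span_homogeneous_eq_top 𝒢P) (span_tprod_homogeneous_eq_top (κ := Fin n) ℬ))
    (span_homogeneous_eq_top 𝒢Q)) (span_tprod_homogeneous_eq_top (κ := Fin m) 𝒜)
  refine eq_top_iff.2 (h.symm.le.trans (Submodule.span_mono ?_))
  rintro _ ⟨_, ⟨_, ⟨p, ⟨dp, hp⟩, _, ⟨degb, b, hb, rfl⟩, rfl⟩, q, ⟨dq, hq⟩, rfl⟩,
    _, ⟨dega, a, ha, rfl⟩, rfl⟩
  exact ⟨dp, dq, degb, dega, p, q, b, a, hp, hq, hb, ha, rfl⟩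

end PureTensor

section Bicomplex

variable (R : Type*) {A B : Type} {P Q : Type*} [CommRing R] [Ring A] [Algebra R A] [Ring B]
  [Algebra R B] [AddCommGroup P] [Module R P] [AddCommGroup Q] [Module R Q]

def hochschildA [SMul A P] [SMul Aᵐᵒᵖ Q] {m n : ℕ} (ε : ℤ) (p : P) (b : Fin n → B) (q : Q)
    (a : Fin (m + 1) → A) : ((P ⊗[R] TensorPower R n B) ⊗[R] Q) ⊗[R] TensorPower R m A :=
  hochschildSum (pureTensor R p b (op (a 0) • q) (Fin.tail a))
    (fun i : Fin m => pureTensor R p b q (mulFace i a)) ε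
    (pureTensor R (a (Fin.last m) • p) b q (Fin.init a))

def hochschildB [SMul Bᵐᵒᵖ P] [SMul B Q] {m n : ℕ} (ε : ℤ) (p : P) (b : Fin (n + 1) → B) (q : Q)
    (a : Fin m → A) : ((P ⊗[R] TensorPower R n B) ⊗[R] Q) ⊗[R] TensorPower R m A :=
  hochschildSum (pureTensor R (op (b 0) • p) (Fin.tail b) q a)
    (fun j : Fin n => pureTensor R p (mulFace j b) q a) ε
    (pureTensor R p (Fin.init b) (b (Fin.last n) • q) a)

theorem hochschildA_hochschildB_comm [SMul A P] [SMul Bᵐᵒᵖ P] [SMulCommClass A Bᵐᵒᵖ P]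
    [SMul B Q] [SMul Aᵐᵒᵖ Q] [SMulCommClass B Aᵐᵒᵖ Q]
    {m n : ℕ} (ε ε' : ℤ) (p : P) (b : Fin (n + 1) → B) (q : Q) (a : Fin (m + 1) → A) :
    hochschildSum (hochschildA R ε (op (b 0) • p) (Fin.tail b) q a)
        (fun j : Fin n => hochschildA R ε p (mulFace j b) q a) ε'
        (hochschildA R ε p (Fin.init b) (b (Fin.last n) • q) a) =
      hochschildSum (hochschildB R ε' p b (op (a 0) • q) (Fin.tail a))
        (fun i : Fin m => hochschildB R ε' p b q (mulFace i a)) ε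
        (hochschildB R ε' (a (Fin.last m) • p) b q (Fin.init a)) := by
  simp only [hochschildA, hochschildB, smul_comm (a (Fin.last m)) (op (b 0)) p,
    smul_comm (b (Fin.last n)) (op (a 0)) q]
  exact hochschildSum_comm _ _ _ _ _ _ _ _ _ _ _

variable {R} (𝒜 : ZMod 2 → Submodule R A) (ℬ : ZMod 2 → Submodule R B)
  (𝒢P : ZMod 2 → Submodule R P) (𝒢Q : ZMod 2 → Submodule R Q)

def IsHochschildDifferentialA [SMul A P] [SMul Aᵐᵒᵖ Q]
    (d' : ∀ m n : ℕ, (((P ⊗[R] TensorPower R n B) ⊗[R] Q) ⊗[R] TensorPower R (m + 1) A) →ₗ[R]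
      (((P ⊗[R] TensorPower R n B) ⊗[R] Q) ⊗[R] TensorPower R m A)) : Prop :=
  ∀ (m n : ℕ) (dp dq : ZMod 2) (degb : Fin n → ZMod 2) (dega : Fin (m + 1) → ZMod 2)
    (p : P) (q : Q) (b : Fin n → B) (a : Fin (m + 1) → A),
    p ∈ 𝒢P dp → q ∈ 𝒢Q dq → (∀ k, b k ∈ ℬ (degb k)) → (∀ k, a k ∈ 𝒜 (dega k)) →
    d' m n (pureTensor R p b q a) =
      hochschildA R ((-1 : ℤ) ^ (m + 1) * ksign (dega (Fin.last m))
        (dp + ∑ k, degb k + dq + ∑ j : Fin m, dega j.castSucc)) p b q a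

def IsHochschildDifferentialB [SMul Bᵐᵒᵖ P] [SMul B Q]
    (d'' : ∀ m n : ℕ, (((P ⊗[R] TensorPower R (n + 1) B) ⊗[R] Q) ⊗[R] TensorPower R m A) →ₗ[R]
      (((P ⊗[R] TensorPower R n B) ⊗[R] Q) ⊗[R] TensorPower R m A)) : Prop :=
  ∀ (m n : ℕ) (dp dq : ZMod 2) (degb : Fin (n + 1) → ZMod 2) (dega : Fin m → ZMod 2)
    (p : P) (q : Q) (b : Fin (n + 1) → B) (a : Fin m → A),
    p ∈ 𝒢P dp → q ∈ 𝒢Q dq → (∀ k, b k ∈ ℬ (degb k)) → (∀ k, a k ∈ 𝒜 (dega k)) →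
    d'' m n (pureTensor R p b q a) =
      (-1 : ℤ) ^ m • hochschildB R ((-1 : ℤ) ^ (n + 1) * ksign (degb (Fin.last n))
        (dq + ∑ k, dega k + dp + ∑ j : Fin n, degb j.castSucc)) p b q a

variable {𝒜 ℬ 𝒢P 𝒢Q}

namespace IsHochschildDifferentialA

variable [SMul A P] [SMul Aᵐᵒᵖ Q]
  {d' : ∀ m n : ℕ, (((P ⊗[R] TensorPower R n B) ⊗[R] Q) ⊗[R] TensorPower R (m + 1) A) →ₗ[R]
    (((P ⊗[R] TensorPower R n B) ⊗[R] Q) ⊗[R] TensorPower R m A)}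

theorem apply_pureTensor (hd' : IsHochschildDifferentialA 𝒜 ℬ 𝒢P 𝒢Q d') {m n : ℕ}
    {dp dq t : ZMod 2} {degb : Fin n → ZMod 2} {dega : Fin (m + 1) → ZMod 2} {p : P} {q : Q}
    {b : Fin n → B} {a : Fin (m + 1) → A} (hp : p ∈ 𝒢P dp) (hq : q ∈ 𝒢Q dq)
    (hb : ∀ k, b k ∈ ℬ (degb k)) (ha : ∀ k, a k ∈ 𝒜 (dega k))
    (ht : dp + ∑ k, degb k + dq = t) :
    d' m n (pureTensor R p b q a) =
      hochschildA R ((-1 : ℤ) ^ (m + 1) * ksign (dega (Fin.last m))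
        (t + ∑ j : Fin m, dega j.castSucc)) p b q a :=
  ht ▸ hd' m n dp dq degb dega p q b a hp hq hb ha

theorem apply_hochschildB [SMul Bᵐᵒᵖ P] [SMul B Q] [SetLike.GradedMul ℬ]
    (hd' : IsHochschildDifferentialA 𝒜 ℬ 𝒢P 𝒢Q d')
    (hPr : ∀ (i j : ZMod 2) (b : B) (p : P), b ∈ ℬ i → p ∈ 𝒢P j → op b • p ∈ 𝒢P (j + i))
    (hQl : ∀ (i j : ZMod 2) (b : B) (q : Q), b ∈ ℬ i → q ∈ 𝒢Q j → b • q ∈ 𝒢Q (i + j))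
    {m n : ℕ} {dp dq : ZMod 2} {degb : Fin (n + 1) → ZMod 2} {dega : Fin (m + 1) → ZMod 2}
    {p : P} {q : Q} {b : Fin (n + 1) → B} {a : Fin (m + 1) → A} (hp : p ∈ 𝒢P dp)
    (hq : q ∈ 𝒢Q dq) (hb : ∀ k, b k ∈ ℬ (degb k)) (ha : ∀ k, a k ∈ 𝒜 (dega k)) (ε : ℤ) :
    d' m n (hochschildB R ε p b q a) =
      hochschildSum
        (hochschildA R ((-1 : ℤ) ^ (m + 1) * ksign (dega (Fin.last m))
          (dp + ∑ k, degb k + dq + ∑ j : Fin m, dega j.castSucc)) (op (b 0) • p) (Fin.tail b) q a)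
        (fun j : Fin n => hochschildA R ((-1 : ℤ) ^ (m + 1) * ksign (dega (Fin.last m))
          (dp + ∑ k, degb k + dq + ∑ j : Fin m, dega j.castSucc)) p (mulFace j b) q a) ε
        (hochschildA R ((-1 : ℤ) ^ (m + 1) * ksign (dega (Fin.last m))
          (dp + ∑ k, degb k + dq + ∑ j : Fin m, dega j.castSucc)) p (Fin.init b)
          (b (Fin.last n) • q) a) := by
  rw [hochschildB, map_hochschildSum]
  congr 1
  · exact hd'.apply_pureTensor (hPr _ _ _ _ (hb 0) hp) hq (fun k => hb k.succ) ha
      (by rw [Fin.sum_univ_succ degb, add_assoc dp])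
  · exact funext fun j => hd'.apply_pureTensor hp hq (mulFace_mem ℬ j hb) ha
      (by rw [sum_addFace])
  · exact hd'.apply_pureTensor hp (hQl _ _ _ _ (hb _) hq) (fun k => hb k.castSucc) ha
      (by rw [Fin.sum_univ_castSucc degb]; ring)

end IsHochschildDifferentialA

namespace IsHochschildDifferentialB

variable [SMul Bᵐᵒᵖ P] [SMul B Q]
  {d'' : ∀ m n : ℕ, (((P ⊗[R] TensorPower R (n + 1) B) ⊗[R] Q) ⊗[R] TensorPower R m A) →ₗ[R]
    (((P ⊗[R] TensorPower R n B) ⊗[R] Q) ⊗[R] TensorPower R m A)}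

theorem apply_pureTensor (hd'' : IsHochschildDifferentialB 𝒜 ℬ 𝒢P 𝒢Q d'') {m n : ℕ}
    {dp dq t : ZMod 2} {degb : Fin (n + 1) → ZMod 2} {dega : Fin m → ZMod 2} {p : P} {q : Q}
    {b : Fin (n + 1) → B} {a : Fin m → A} (hp : p ∈ 𝒢P dp) (hq : q ∈ 𝒢Q dq)
    (hb : ∀ k, b k ∈ ℬ (degb k)) (ha : ∀ k, a k ∈ 𝒜 (dega k))
    (ht : dq + ∑ k, dega k + dp = t) :
    d'' m n (pureTensor R p b q a) =
      (-1 : ℤ) ^ m • hochschildB R ((-1 : ℤ) ^ (n + 1) * ksign (degb (Fin.last n))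
        (t + ∑ j : Fin n, degb j.castSucc)) p b q a :=
  ht ▸ hd'' m n dp dq degb dega p q b a hp hq hb ha

theorem apply_hochschildA [SMul A P] [SMul Aᵐᵒᵖ Q] [SetLike.GradedMul 𝒜]
    (hd'' : IsHochschildDifferentialB 𝒜 ℬ 𝒢P 𝒢Q d'')
    (hPl : ∀ (i j : ZMod 2) (a : A) (p : P), a ∈ 𝒜 i → p ∈ 𝒢P j → a • p ∈ 𝒢P (i + j))
    (hQr : ∀ (i j : ZMod 2) (a : A) (q : Q), a ∈ 𝒜 i → q ∈ 𝒢Q j → op a • q ∈ 𝒢Q (j + i))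
    {m n : ℕ} {dp dq : ZMod 2} {degb : Fin (n + 1) → ZMod 2} {dega : Fin (m + 1) → ZMod 2}
    {p : P} {q : Q} {b : Fin (n + 1) → B} {a : Fin (m + 1) → A} (hp : p ∈ 𝒢P dp)
    (hq : q ∈ 𝒢Q dq) (hb : ∀ k, b k ∈ ℬ (degb k)) (ha : ∀ k, a k ∈ 𝒜 (dega k)) (ε : ℤ) :
    d'' m n (hochschildA R ε p b q a) =
      (-1 : ℤ) ^ m • hochschildSum
        (hochschildB R ((-1 : ℤ) ^ (n + 1) * ksign (degb (Fin.last n))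
          (dq + ∑ k, dega k + dp + ∑ j : Fin n, degb j.castSucc)) p b (op (a 0) • q) (Fin.tail a))
        (fun i : Fin m => hochschildB R ((-1 : ℤ) ^ (n + 1) * ksign (degb (Fin.last n))
          (dq + ∑ k, dega k + dp + ∑ j : Fin n, degb j.castSucc)) p b q (mulFace i a)) ε
        (hochschildB R ((-1 : ℤ) ^ (n + 1) * ksign (degb (Fin.last n))
          (dq + ∑ k, dega k + dp + ∑ j : Fin n, degb j.castSucc)) (a (Fin.last m) • p) b q
          (Fin.init a)) := by
  rw [hochschildA, map_hochschildSum, smul_hochschildSum]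
  congr 1
  · exact hd''.apply_pureTensor hp (hQr _ _ _ _ (ha 0) hq) hb (fun k => ha k.succ)
      (by rw [Fin.sum_univ_succ dega, add_assoc dq])
  · exact funext fun i => hd''.apply_pureTensor hp hq hb (mulFace_mem 𝒜 i ha)
      (by rw [sum_addFace])
  · exact hd''.apply_pureTensor (hPl _ _ _ _ (ha _) hp) hq hb (fun k => ha k.castSucc)
      (by rw [Fin.sum_univ_castSucc dega]; ring)

end IsHochschildDifferentialB

end Bicomplex

theorem double_complex_anticommute_general
    {R A B P Q : Type} [CommRing R] [Ring A] [Algebra R A] [Ring B] [Algebra R B]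
    [AddCommGroup P] [Module R P] [Module A P] [Module Bᵐᵒᵖ P]
    [SMulCommClass A Bᵐᵒᵖ P]
    [AddCommGroup Q] [Module R Q] [Module B Q] [Module Aᵐᵒᵖ Q]
    [SMulCommClass B Aᵐᵒᵖ Q]
    (𝒜 : ZMod 2 → Submodule R A) [GradedAlgebra 𝒜]
    (ℬ : ZMod 2 → Submodule R B) [GradedAlgebra ℬ]
    (𝒢P : ZMod 2 → Submodule R P) [DirectSum.Decomposition 𝒢P]
    (𝒢Q : ZMod 2 → Submodule R Q) [DirectSum.Decomposition 𝒢Q]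
    (hPl : ∀ (i j : ZMod 2) (a : A) (p : P), a ∈ 𝒜 i → p ∈ 𝒢P j → a • p ∈ 𝒢P (i + j))
    (hPr : ∀ (i j : ZMod 2) (b : B) (p : P), b ∈ ℬ i → p ∈ 𝒢P j → op b • p ∈ 𝒢P (j + i))
    (hQl : ∀ (i j : ZMod 2) (b : B) (q : Q), b ∈ ℬ i → q ∈ 𝒢Q j → b • q ∈ 𝒢Q (i + j))
    (hQr : ∀ (i j : ZMod 2) (a : A) (q : Q), a ∈ 𝒜 i → q ∈ 𝒢Q j → op a • q ∈ 𝒢Q (j + i))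
    (d' : ∀ m n : ℕ, (((P ⊗[R] TensorPower R n B) ⊗[R] Q) ⊗[R] TensorPower R (m + 1) A) →ₗ[R]
      (((P ⊗[R] TensorPower R n B) ⊗[R] Q) ⊗[R] TensorPower R m A))
    (d'' : ∀ m n : ℕ, (((P ⊗[R] TensorPower R (n + 1) B) ⊗[R] Q) ⊗[R] TensorPower R m A) →ₗ[R]
      (((P ⊗[R] TensorPower R n B) ⊗[R] Q) ⊗[R] TensorPower R m A))
    (hd' : ∀ (m n : ℕ) (dp dq : ZMod 2) (degb : Fin n → ZMod 2) (dega : Fin (m + 1) → ZMod 2)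
      (p : P) (q : Q) (b : Fin n → B) (a : Fin (m + 1) → A),
      p ∈ 𝒢P dp → q ∈ 𝒢Q dq → (∀ k, b k ∈ ℬ (degb k)) → (∀ k, a k ∈ 𝒜 (dega k)) →
      d' m n (((p ⊗ₜ[R] tprod R b) ⊗ₜ[R] q) ⊗ₜ[R] tprod R a) =
        ((p ⊗ₜ[R] tprod R b) ⊗ₜ[R] (op (a 0) • q)) ⊗ₜ[R] tprod R (Fin.tail a)
        + ∑ i : Fin m, ((-1 : ℤ) ^ ((i : ℕ) + 1)) •
            (((p ⊗ₜ[R] tprod R b) ⊗ₜ[R] q) ⊗ₜ[R] tprod R (mulFace (i : ℕ) a))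
        + ((-1 : ℤ) ^ (m + 1) *
            ksign (dega (Fin.last m))
              (dp + (∑ k, degb k) + dq + ∑ j : Fin m, dega (Fin.castSucc j))) •
            ((((a (Fin.last m) • p) ⊗ₜ[R] tprod R b) ⊗ₜ[R] q) ⊗ₜ[R] tprod R (Fin.init a)))
    (hd'' : ∀ (m n : ℕ) (dp dq : ZMod 2) (degb : Fin (n + 1) → ZMod 2) (dega : Fin m → ZMod 2)
      (p : P) (q : Q) (b : Fin (n + 1) → B) (a : Fin m → A),
      p ∈ 𝒢P dp → q ∈ 𝒢Q dq → (∀ k, b k ∈ ℬ (degb k)) → (∀ k, a k ∈ 𝒜 (dega k)) →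
      d'' m n (((p ⊗ₜ[R] tprod R b) ⊗ₜ[R] q) ⊗ₜ[R] tprod R a) =
        ((-1 : ℤ) ^ m) •
          ((((op (b 0) • p) ⊗ₜ[R] tprod R (Fin.tail b)) ⊗ₜ[R] q) ⊗ₜ[R] tprod R a
          + ∑ j : Fin n, ((-1 : ℤ) ^ ((j : ℕ) + 1)) •
              (((p ⊗ₜ[R] tprod R (mulFace (j : ℕ) b)) ⊗ₜ[R] q) ⊗ₜ[R] tprod R a)
          + ((-1 : ℤ) ^ (n + 1) *
              ksign (degb (Fin.last n))
                (dq + (∑ k, dega k) + dp + ∑ j : Fin n, degb (Fin.castSucc j))) •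
              (((p ⊗ₜ[R] tprod R (Fin.init b)) ⊗ₜ[R] (b (Fin.last n) • q)) ⊗ₜ[R] tprod R a))) :
    ∀ m n : ℕ, d' m n ∘ₗ d'' (m + 1) n + d'' m n ∘ₗ d' m (n + 1) = 0 := by
  intro m n
  have hA : IsHochschildDifferentialA 𝒜 ℬ 𝒢P 𝒢Q d' := hd'
  have hB : IsHochschildDifferentialB 𝒜 ℬ 𝒢P 𝒢Q d'' := hd''
  refine LinearMap.ext_on (span_homogeneous_pureTensor_eq_top 𝒢P ℬ 𝒢Q 𝒜 (m + 1) (n + 1)) ?_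
  rintro _ ⟨dp, dq, degb, dega, p, q, b, a, hp, hq, hb, ha, rfl⟩
  rw [LinearMap.add_apply, LinearMap.comp_apply, LinearMap.comp_apply, LinearMap.zero_apply,
    hB (m + 1) n dp dq degb dega p q b a hp hq hb ha, map_zsmul,
    hA.apply_hochschildB hPr hQl hp hq hb ha, hA m (n + 1) dp dq degb dega p q b a hp hq hb ha,
    hB.apply_hochschildA hPl hQr hp hq hb ha, hochschildA_hochschildB_comm, pow_succ,
    mul_neg_one, neg_smul, neg_add_cancel]

/-- For unital superalgebras `A, B`, an `A–B`-superbimodule `P` and a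
`B–A`-superbimodule `Q`, set `C_{m,n} = P⊗B^{⊗n}⊗Q⊗A^{⊗m}`; let `d'` be the graded
Hochschild differential of `A` with coefficients in `P⊗B^{⊗n}⊗Q` and `d''` be `(-1)^m`
times the (cyclically transported) graded Hochschild differential of `B` with coefficients
in `Q⊗A^{⊗m}⊗P`.  Then `d'd'' + d''d' = 0`, so `(C_{m,n}, d', d'')` is a double complex. -/
theorem double_complex_anticommute
    {R A B P Q : Type} [CommRing R] [Ring A] [Algebra R A] [Ring B] [Algebra R B]
    [AddCommGroup P] [Module R P] [Module A P] [Module Bᵐᵒᵖ P]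
    [IsScalarTower R A P] [IsScalarTower R Bᵐᵒᵖ P] [SMulCommClass A Bᵐᵒᵖ P]
    [AddCommGroup Q] [Module R Q] [Module B Q] [Module Aᵐᵒᵖ Q]
    [IsScalarTower R B Q] [IsScalarTower R Aᵐᵒᵖ Q] [SMulCommClass B Aᵐᵒᵖ Q]
    (𝒜 : ZMod 2 → Submodule R A) [GradedAlgebra 𝒜]
    (ℬ : ZMod 2 → Submodule R B) [GradedAlgebra ℬ]
    (𝒢P : ZMod 2 → Submodule R P) [DirectSum.Decomposition 𝒢P]
    (𝒢Q : ZMod 2 → Submodule R Q) [DirectSum.Decomposition 𝒢Q]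
    (hPl : ∀ (i j : ZMod 2) (a : A) (p : P), a ∈ 𝒜 i → p ∈ 𝒢P j → a • p ∈ 𝒢P (i + j))
    (hPr : ∀ (i j : ZMod 2) (b : B) (p : P), b ∈ ℬ i → p ∈ 𝒢P j → op b • p ∈ 𝒢P (j + i))
    (hQl : ∀ (i j : ZMod 2) (b : B) (q : Q), b ∈ ℬ i → q ∈ 𝒢Q j → b • q ∈ 𝒢Q (i + j))
    (hQr : ∀ (i j : ZMod 2) (a : A) (q : Q), a ∈ 𝒜 i → q ∈ 𝒢Q j → op a • q ∈ 𝒢Q (j + i))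
    (d' : ∀ m n : ℕ, (((P ⊗[R] TensorPower R n B) ⊗[R] Q) ⊗[R] TensorPower R (m + 1) A) →ₗ[R]
      (((P ⊗[R] TensorPower R n B) ⊗[R] Q) ⊗[R] TensorPower R m A))
    (d'' : ∀ m n : ℕ, (((P ⊗[R] TensorPower R (n + 1) B) ⊗[R] Q) ⊗[R] TensorPower R m A) →ₗ[R]
      (((P ⊗[R] TensorPower R n B) ⊗[R] Q) ⊗[R] TensorPower R m A))
    (hd' : ∀ (m n : ℕ) (dp dq : ZMod 2) (degb : Fin n → ZMod 2) (dega : Fin (m + 1) → ZMod 2)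
      (p : P) (q : Q) (b : Fin n → B) (a : Fin (m + 1) → A),
      p ∈ 𝒢P dp → q ∈ 𝒢Q dq → (∀ k, b k ∈ ℬ (degb k)) → (∀ k, a k ∈ 𝒜 (dega k)) →
      d' m n (((p ⊗ₜ[R] tprod R b) ⊗ₜ[R] q) ⊗ₜ[R] tprod R a) =
        ((p ⊗ₜ[R] tprod R b) ⊗ₜ[R] (op (a 0) • q)) ⊗ₜ[R] tprod R (Fin.tail a)
        + ∑ i : Fin m, ((-1 : ℤ) ^ ((i : ℕ) + 1)) •
            (((p ⊗ₜ[R] tprod R b) ⊗ₜ[R] q) ⊗ₜ[R] tprod R (mulFace (i : ℕ) a))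
        + ((-1 : ℤ) ^ (m + 1) *
            ksign (dega (Fin.last m))
              (dp + (∑ k, degb k) + dq + ∑ j : Fin m, dega (Fin.castSucc j))) •
            ((((a (Fin.last m) • p) ⊗ₜ[R] tprod R b) ⊗ₜ[R] q) ⊗ₜ[R] tprod R (Fin.init a)))
    (hd'' : ∀ (m n : ℕ) (dp dq : ZMod 2) (degb : Fin (n + 1) → ZMod 2) (dega : Fin m → ZMod 2)
      (p : P) (q : Q) (b : Fin (n + 1) → B) (a : Fin m → A),
      p ∈ 𝒢P dp → q ∈ 𝒢Q dq → (∀ k, b k ∈ ℬ (degb k)) → (∀ k, a k ∈ 𝒜 (dega k)) →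
      d'' m n (((p ⊗ₜ[R] tprod R b) ⊗ₜ[R] q) ⊗ₜ[R] tprod R a) =
        ((-1 : ℤ) ^ m) •
          ((((op (b 0) • p) ⊗ₜ[R] tprod R (Fin.tail b)) ⊗ₜ[R] q) ⊗ₜ[R] tprod R a
          + ∑ j : Fin n, ((-1 : ℤ) ^ ((j : ℕ) + 1)) •
              (((p ⊗ₜ[R] tprod R (mulFace (j : ℕ) b)) ⊗ₜ[R] q) ⊗ₜ[R] tprod R a)
          + ((-1 : ℤ) ^ (n + 1) *
              ksign (degb (Fin.last n))
                (dq + (∑ k, dega k) + dp + ∑ j : Fin n, degb (Fin.castSucc j))) •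
              (((p ⊗ₜ[R] tprod R (Fin.init b)) ⊗ₜ[R] (b (Fin.last n) • q)) ⊗ₜ[R] tprod R a))) :
    ∀ m n : ℕ, d' m n ∘ₗ d'' (m + 1) n + d'' m n ∘ₗ d' m (n + 1) = 0 :=
  double_complex_anticommute_general 𝒜 ℬ 𝒢P 𝒢Q hPl hPr hQl hQr d' d'' hd' hd''
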